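/- For every nonnegative integer n, the shifted Hankel determinant d_2(n,t) = \det( M_{2+i+j}(t) )_{i,j=0}^{n-1} equals \sum_{j=0}^{n} F_j(t)^2 minus the correction for n = 0, i.e. d_2(0,t) = 1 and for n \geq 1, d_2(n,t) = \sum_{j=0}^{n} F_j(t)^2. -/

import Mathlib

open Polynomial

/-- The weight polynomials `M_{n,k}(t)` of Motzkin paths from `(0,0)` to `(n,k)`. -/
noncomputable def motzkinPoly : ℕ → ℤ → Polynomial ℤ
  | 0, k => if k = 0 then 1 else 0
  | n + 1, k =>
      if k < 0 then 0 else
        motzkinPoly n (k - 1) + X * motzkinPoly n k + motzkinPoly n (k + 1)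
  termination_by n _ => n


/-- The Fibonacci polynomials: `F_0 = 1`, `F_1 = t`, `F_n = t·F_{n-1} - F_{n-2}`. -/
noncomputable def fibPoly : ℕ → Polynomial ℤ
  | 0 => 1
  | 1 => X
  | n + 2 => X * fibPoly (n + 1) - fibPoly n

/-!
Let `A = (M_{i,k})` be the lower unitriangular Motzkin matrix and `J` the tridiagonal matrix
with `t` on the diagonal and `1` next to it. The recurrence says that row `i + 1` of `A` is row `i`
of `A` times `J`; as `J` is symmetric, `M_{m+n,0} = ∑ₖ M_{m,k} M_{n,k}`. Hence the shifted Hankel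
matrix of size `n` is `A Kₙ Aᵀ`, where `Kₙ` is the leading `n × n` block of `J_{n+1}²`, and
`d₂(n) = det Kₙ`. Since `K_{n+1} = J_{n+1}² + E_{nn}`, expanding along the last column gives
`det K_{n+1} = (det J_{n+1})² + det Kₙ`, and `det Jₙ = Fₙ` is the continuant recurrence.
-/

open Finset Matrix

theorem motzkinPoly_of_neg (n : ℕ) {k : ℤ} (hk : k < 0) : motzkinPoly n k = 0 := by
  cases n <;> simp [motzkinPoly, hk, hk.ne]

theorem motzkinPoly_succ_natCast (n k : ℕ) :
    motzkinPoly (n + 1) k =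
      motzkinPoly n (k - 1) + X * motzkinPoly n k + motzkinPoly n (k + 1) := by
  rw [motzkinPoly, if_neg (by omega)]

theorem motzkinPoly_eq_zero_of_lt {n : ℕ} {k : ℤ} (h : n < k) : motzkinPoly n k = 0 := by
  induction n generalizing k with
  | zero => simp only [motzkinPoly, if_neg (by omega : k ≠ 0)]
  | succ n ih =>
    rw [motzkinPoly, if_neg (by omega), ih (by omega), ih (by omega), ih (by omega)]
    ring

theorem motzkinPoly_self (n : ℕ) : motzkinPoly n n = 1 := by
  induction n with
  | zero => simp [motzkinPoly]
  | succ n ih =>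
    rw [motzkinPoly_succ_natCast, Nat.cast_succ, add_sub_cancel_right, ih,
      motzkinPoly_eq_zero_of_lt (k := n + 1) (by omega),
      motzkinPoly_eq_zero_of_lt (k := n + 1 + 1) (by omega)]
    ring

section Jacobi

variable {R : Type*}

def jacobiEntry [Zero R] [One R] (a : R) (i j : ℕ) : R :=
  if i = j then a else if i + 1 = j ∨ j + 1 = i then 1 else 0

theorem jacobiEntry_comm [Zero R] [One R] (a : R) (i j : ℕ) :
    jacobiEntry a i j = jacobiEntry a j i := by
  unfold jacobiEntry
  split_ifs <;> first | rfl | omega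

theorem jacobiEntry_add_add [Zero R] [One R] (a : R) (i j d : ℕ) :
    jacobiEntry a (i + d) (j + d) = jacobiEntry a i j := by
  unfold jacobiEntry
  split_ifs <;> first | rfl | omega

theorem jacobiEntry_eq_add [AddMonoidWithOne R] (a : R) (l k : ℕ) :
    jacobiEntry a l k =
      (if l = k then a else 0) + (if l + 1 = k then 1 else 0) + (if l = k + 1 then 1 else 0) := by
  unfold jacobiEntry
  split_ifs <;> first | (exfalso; omega) | simp

def jacobiMatrix [Zero R] [One R] (a : R) (n : ℕ) : Matrix (Fin n) (Fin n) R :=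
  of fun i j => jacobiEntry a i j

@[simp]
theorem jacobiMatrix_apply [Zero R] [One R] (a : R) (n : ℕ) (i j : Fin n) :
    jacobiMatrix a n i j = jacobiEntry a i j :=
  rfl

theorem jacobiMatrix_transpose [Zero R] [One R] (a : R) (n : ℕ) :
    (jacobiMatrix a n)ᵀ = jacobiMatrix a n := by
  ext i j : 1
  exact jacobiEntry_comm a j i

variable [CommRing R]

theorem det_jacobiMatrix_add_two (a : R) (n : ℕ) :
    det (jacobiMatrix a (n + 2)) = a * det (jacobiMatrix a (n + 1)) - det (jacobiMatrix a n) := by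
  have hminor₀ : (jacobiMatrix a (n + 2)).submatrix Fin.succ Fin.succ = jacobiMatrix a (n + 1) := by
    ext i j : 1
    exact jacobiEntry_add_add a i j 1
  -- the `(0, 1)` minor has first column `(1, 0, …, 0)`; its complementary block is `Jₙ` again
  have hminor₁ : det ((jacobiMatrix a (n + 2)).submatrix Fin.succ (Fin.succAbove 1)) =
      det (jacobiMatrix a n) := by
    have hcorner : ((jacobiMatrix a (n + 2)).submatrix Fin.succ (Fin.succAbove 1)).submatrix
        Fin.succ Fin.succ = jacobiMatrix a n := by
      ext i j : 1
      exact jacobiEntry_add_add a i j 2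
    rw [det_succ_column_zero, Fin.sum_univ_succ, Fin.succAbove_zero, hcorner]
    simp [jacobiEntry, Fin.succAbove]
  rw [det_succ_row_zero, Fin.sum_univ_succ, Fin.sum_univ_succ, Fin.succAbove_zero, hminor₀,
    Fin.succ_zero_eq_one, hminor₁]
  simp [jacobiEntry, sub_eq_add_neg]

theorem jacobiMatrix_mul_self_submatrix_castSucc (a : R) (n : ℕ) :
    (jacobiMatrix a (n + 2) * jacobiMatrix a (n + 2)).submatrix Fin.castSucc Fin.castSucc =
      jacobiMatrix a (n + 1) * jacobiMatrix a (n + 1) + single (Fin.last n) (Fin.last n) 1 := by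
  ext i j : 1
  rw [submatrix_apply, mul_apply, Fin.sum_univ_castSucc, Matrix.add_apply, mul_apply]
  congr 1
  simp only [jacobiMatrix_apply, jacobiEntry, single_apply, Fin.ext_iff, Fin.val_castSucc,
    Fin.val_last]
  split_ifs <;> first | (exfalso; omega) | simp

theorem det_add_single {n : Type*} [Fintype n] [DecidableEq n] (M : Matrix n n R) (i j : n)
    (c : R) : det (M + single i j c) = det M + c * adjugate M j i := by
  have hrow : M + single i j c = M.updateRow i (M i + c • Pi.single j 1) := by
    ext k l : 1
    rcases eq_or_ne k i with rfl | hk <;> rcases eq_or_ne l j with rfl | hl <;>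
      simp [*, updateRow_apply, Ne.symm]
  rw [hrow, det_updateRow_add, updateRow_eq_self, det_updateRow_smul, adjugate_apply]

theorem det_jacobiMatrix_mul_self_submatrix_castSucc (a : R) (n : ℕ) :
    det ((jacobiMatrix a (n + 1) * jacobiMatrix a (n + 1)).submatrix Fin.castSucc Fin.castSucc) =
      ∑ j ∈ range (n + 1), det (jacobiMatrix a j) ^ 2 := by
  induction n with
  | zero => simp
  | succ n ih =>
    rw [jacobiMatrix_mul_self_submatrix_castSucc, det_add_single,
      adjugate_fin_succ_eq_det_submatrix, Fin.succAbove_last, ih, det_mul, sum_range_succ _ (n + 1),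
      Fin.val_last, Even.neg_one_pow ⟨_, rfl⟩]
    ring

end Jacobi

theorem det_jacobiMatrix_X : ∀ n : ℕ, det (jacobiMatrix (X : ℤ[X]) n) = fibPoly n
  | 0 => by simp [fibPoly]
  | 1 => by simp [jacobiEntry, fibPoly]
  | n + 2 => by
    rw [det_jacobiMatrix_add_two, det_jacobiMatrix_X n, det_jacobiMatrix_X (n + 1), fibPoly]

theorem sum_range_motzkinPoly_mul_jacobiEntry {i k N : ℕ} (hi : i < N) (hk : k < N) :
    ∑ l ∈ range N, motzkinPoly i l * jacobiEntry X l k = motzkinPoly (i + 1) k := by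
  have hup : (if k + 1 < N then motzkinPoly i (k + 1 : ℕ) else 0) = motzkinPoly i (k + 1 : ℕ) := by
    split_ifs
    · rfl
    · exact (motzkinPoly_eq_zero_of_lt (by omega)).symm
  simp only [jacobiEntry_eq_add, mul_add, mul_ite, mul_one, mul_zero, sum_add_distrib,
    sum_ite_eq', mem_range, if_pos hk, hup, motzkinPoly_succ_natCast]
  rcases k with _ | k
  · simp [motzkinPoly_of_neg, mul_comm]
  · simp [if_pos (by omega : k < N), mul_comm, add_comm]

theorem sum_range_motzkinPoly_succ_mul {m n N : ℕ} (hm : m < N) (hn : n < N) :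
    ∑ k ∈ range N, motzkinPoly (m + 1) k * motzkinPoly n k =
      ∑ k ∈ range N, motzkinPoly m k * motzkinPoly (n + 1) k := by
  calc ∑ k ∈ range N, motzkinPoly (m + 1) k * motzkinPoly n k
      = ∑ k ∈ range N, (∑ l ∈ range N, motzkinPoly m l * jacobiEntry X l k) * motzkinPoly n k :=
        sum_congr rfl fun k hk => by
          rw [sum_range_motzkinPoly_mul_jacobiEntry hm (mem_range.1 hk)]
    _ = ∑ l ∈ range N, motzkinPoly m l * ∑ k ∈ range N, motzkinPoly n k * jacobiEntry X k l := by
        simp only [sum_mul, mul_sum]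
        rw [sum_comm]
        refine sum_congr rfl fun l _ => sum_congr rfl fun k _ => ?_
        rw [jacobiEntry_comm]
        ring
    _ = ∑ l ∈ range N, motzkinPoly m l * motzkinPoly (n + 1) l :=
        sum_congr rfl fun l hl => by
          rw [sum_range_motzkinPoly_mul_jacobiEntry hn (mem_range.1 hl)]

theorem motzkinPoly_add_zero_eq_sum_of_add_lt {m n N : ℕ} (h : m + n < N) :
    motzkinPoly (m + n) 0 = ∑ k ∈ range N, motzkinPoly m k * motzkinPoly n k := by
  induction n generalizing m with
  | zero => simp [motzkinPoly, show 0 < N by omega]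
  | succ n ih =>
    rw [show m + (n + 1) = m + 1 + n by omega, ih (by omega),
      sum_range_motzkinPoly_succ_mul (by omega) (by omega)]

theorem sum_range_motzkinPoly_mul_of_le {m N N' : ℕ} (hm : m < N) (hN : N ≤ N')
    (g : ℕ → ℤ[X]) :
    ∑ k ∈ range N', motzkinPoly m k * g k = ∑ k ∈ range N, motzkinPoly m k * g k :=
  (sum_subset (range_subset_range.2 hN) fun k _ hk => by
    rw [motzkinPoly_eq_zero_of_lt (by simp at hk; omega), zero_mul]).symm

theorem motzkinPoly_add_zero_eq_sum {m n N : ℕ} (hm : m < N) :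
    motzkinPoly (m + n) 0 = ∑ k ∈ range N, motzkinPoly m k * motzkinPoly n k := by
  rw [motzkinPoly_add_zero_eq_sum_of_add_lt (N := N + n) (by omega),
    sum_range_motzkinPoly_mul_of_le hm (by omega)]

theorem submatrix_castSucc_mul_mul_transpose {R : Type*} [Semiring R] {n : ℕ}
    {A : Matrix (Fin (n + 1)) (Fin (n + 1)) R} (hA : ∀ i : Fin n, A i.castSucc (Fin.last n) = 0)
    (B : Matrix (Fin (n + 1)) (Fin (n + 1)) R) :
    (A * B * Aᵀ).submatrix Fin.castSucc Fin.castSucc =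
      A.submatrix Fin.castSucc Fin.castSucc * B.submatrix Fin.castSucc Fin.castSucc *
        (A.submatrix Fin.castSucc Fin.castSucc)ᵀ := by
  ext i j : 1
  simp [mul_apply, Fin.sum_univ_castSucc, hA]

noncomputable def motzkinMatrix (n : ℕ) : Matrix (Fin n) (Fin n) ℤ[X] :=
  of fun i k => motzkinPoly i k

theorem motzkinMatrix_submatrix_castSucc (n : ℕ) :
    (motzkinMatrix (n + 1)).submatrix Fin.castSucc Fin.castSucc = motzkinMatrix n :=
  rfl

theorem det_motzkinMatrix (n : ℕ) : det (motzkinMatrix n) = 1 := by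
  rw [det_of_isLowerTriangular (motzkinMatrix n) fun i j (hij : i < j) =>
    motzkinPoly_eq_zero_of_lt (by exact_mod_cast hij)]
  exact prod_eq_one fun i _ => motzkinPoly_self i

theorem motzkinMatrix_mul_jacobiMatrix (n : ℕ) :
    motzkinMatrix n * jacobiMatrix X n = of fun (i k : Fin n) => motzkinPoly (i + 1) k := by
  ext i k : 1
  rw [mul_apply, of_apply]
  exact (Fin.sum_univ_eq_sum_range (fun l => motzkinPoly i l * jacobiEntry X l k) n).trans
    (sum_range_motzkinPoly_mul_jacobiEntry i.isLt k.isLt)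

theorem hankel_motzkinPoly_two_eq (n : ℕ) :
    of (fun i j : Fin n => motzkinPoly (2 + (i : ℕ) + (j : ℕ)) 0) =
      motzkinMatrix n *
        (jacobiMatrix X (n + 1) * jacobiMatrix X (n + 1)).submatrix Fin.castSucc Fin.castSucc *
          (motzkinMatrix n)ᵀ := by
  have hlast (i : Fin n) : motzkinMatrix (n + 1) i.castSucc (Fin.last n) = 0 :=
    motzkinPoly_eq_zero_of_lt (by simp)
  have hsquare : motzkinMatrix (n + 1) * (jacobiMatrix X (n + 1) * jacobiMatrix X (n + 1)) *
      (motzkinMatrix (n + 1))ᵀ = (motzkinMatrix (n + 1) * jacobiMatrix X (n + 1)) *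
        (motzkinMatrix (n + 1) * jacobiMatrix X (n + 1))ᵀ := by
    rw [transpose_mul, jacobiMatrix_transpose]
    simp only [mul_assoc]
  rw [← motzkinMatrix_submatrix_castSucc, ← submatrix_castSucc_mul_mul_transpose hlast, hsquare,
    motzkinMatrix_mul_jacobiMatrix]
  ext i j : 1
  simp only [submatrix_apply, mul_apply, transpose_apply, of_apply, Fin.val_castSucc]
  rw [Fin.sum_univ_eq_sum_range (fun k => motzkinPoly (i + 1) k * motzkinPoly (j + 1) k),
    ← motzkinPoly_add_zero_eq_sum (by omega)]
  congr 1
  omega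

theorem det_hankel_motzkinPoly_two (n : ℕ) :
    det (of fun i j : Fin n => motzkinPoly (2 + (i : ℕ) + (j : ℕ)) 0) =
      ∑ j ∈ range (n + 1), fibPoly j ^ 2 := by
  rw [hankel_motzkinPoly_two_eq, det_mul, det_mul, det_transpose, det_motzkinMatrix,
    det_jacobiMatrix_mul_self_submatrix_castSucc]
  simp [det_jacobiMatrix_X]

/-- `d_2(0,t) = 1` and, for `n ≥ 1`, `d_2(n,t) = ∑_{j=0}^n F_j(t)^2`. -/
theorem hankel_det_motzkin_shift_two (n : ℕ) :
    Matrix.det (Matrix.of fun i j : Fin 0 => motzkinPoly (2 + (i : ℕ) + (j : ℕ)) 0) = 1 ∧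
    (1 ≤ n →
      Matrix.det (Matrix.of fun i j : Fin n => motzkinPoly (2 + (i : ℕ) + (j : ℕ)) 0) =
        ∑ j ∈ Finset.range (n + 1), fibPoly j ^ 2) :=
  ⟨det_isEmpty, fun _ => det_hankel_motzkinPoly_two n⟩
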